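/- For 0 < α ≤ π/4 and T_B = 2(sin²α |0⟩⟨0| + |1⟩⟨1| + cos²α |2⟩⟨2|), the operator I ⊗ T_B − J_α is positive semidefinite, where J_α is the Choi matrix of N_α. Moreover tr T_B = 4. -/

import Mathlib

open Matrix Kronecker Complex ComplexOrder

noncomputable section

abbrev M3 : Type := Matrix (Fin 3) (Fin 3) ℂ
abbrev M9 : Type := Matrix (Fin 3 × Fin 3) (Fin 3 × Fin 3) ℂ

/-- |i⟩⟨j| on ℂ³ -/
def ket (i j : Fin 3) : M3 := Matrix.single i j 1

def E (α : ℝ) : M3 := (Real.sin α : ℂ) • ket 0 1 + ket 1 2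
def D (α : ℝ) : M3 := (Real.cos α : ℂ) • ket 2 1 + ket 1 0

def u (α : ℝ) : Fin 3 × Fin 3 → ℂ := fun p =>
  (((if p = (1,0) then Real.sin α else 0) + (if p = (2,1) then 1 else 0)) /
    Real.sqrt (1 + Real.sin α ^ 2) : ℝ)

def v (α : ℝ) : Fin 3 × Fin 3 → ℂ := fun p =>
  (((if p = (1,2) then Real.cos α else 0) + (if p = (0,1) then 1 else 0)) /
    Real.sqrt (1 + Real.cos α ^ 2) : ℝ)

/-- Projection onto span{|u_α⟩, |v_α⟩}, the support of the Choi matrix of N_α. -/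
def Pproj (α : ℝ) : M9 :=
  vecMulVec (u α) (star (u α)) + vecMulVec (v α) (star (v α))

/-- Partial trace over the first (A) factor. -/
def trA (M : M9) : M3 := fun i j => ∑ k, M (k, i) (k, j)

/-- Partial trace over the second (B) factor. -/
def trB (M : M9) : M3 := fun i j => ∑ k, M (i, k) (j, k)

def Jmat (α : ℝ) : M9 :=
  ((1 + Real.sin α ^ 2 : ℝ) : ℂ) • vecMulVec (u α) (star (u α)) +
  ((1 + Real.cos α ^ 2 : ℝ) : ℂ) • vecMulVec (v α) (star (v α))

def TB (α : ℝ) : M3 :=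
  (2 * Real.sin α ^ 2 : ℂ) • ket 0 0 + (2 : ℂ) • ket 1 1 + (2 * Real.cos α ^ 2 : ℂ) • ket 2 2

/-!
The Choi matrix is `J_α = |ũ⟩⟨ũ| + |ṽ⟩⟨ṽ|` with the unnormalised vectors
`ũ = sin α |10⟩ + |21⟩` and `ṽ = cos α |12⟩ + |01⟩`. By the parallelogram law
`|x + y⟩⟨x + y| = 2 (|x⟩⟨x| + |y⟩⟨y|) - |x - y⟩⟨x - y|`, each term is dominated by twice the
diagonal matrix carrying the squared weights of its two (orthogonal) components, and these
weights `2 sin² α, 2, 2 cos² α, 2` at `|10⟩, |21⟩, |12⟩, |01⟩` are exactly the entries of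
`I ⊗ T_B` there. Hence `I ⊗ T_B - J_α` is a sum of two rank-one positive matrices and a
diagonal matrix with nonnegative entries.
-/

namespace Matrix

theorem one_kronecker_diagonal {R l n : Type*} [MulZeroOneClass R] [DecidableEq l]
    [DecidableEq n] (b : n → R) :
    (1 : Matrix l l R) ⊗ₖ diagonal b = diagonal fun p => b p.2 := by
  rw [← diagonal_one, diagonal_kronecker_diagonal]
  simp only [one_mul]

theorem vecMulVec_single_star_single {R n : Type*} [Semiring R] [StarRing R] [DecidableEq n]
    (p : n) (c : R) :
    vecMulVec (Pi.single p c) (star (Pi.single p c)) = diagonal (Pi.single p (c * star c)) := by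
  ext i j
  simp only [vecMulVec_apply, diagonal_apply, Pi.star_apply, Pi.single_apply]
  split_ifs <;> simp_all

theorem vecMulVec_add_star_add {R n : Type*} [CommRing R] [StarRing R] (x y : n → R) :
    vecMulVec (x + y) (star (x + y)) =
      (2 : R) • (vecMulVec x (star x) + vecMulVec y (star y)) -
        vecMulVec (x - y) (star (x - y)) := by
  ext i j
  simp only [vecMulVec_apply, sub_apply, add_apply, smul_apply, Pi.add_apply, Pi.sub_apply,
    Pi.star_apply, star_add, star_sub, smul_eq_mul]
  ring

theorem ofReal_smul_vecMulVec_inv_sqrt_smul {n : Type*} {c : ℝ} (hc : 0 < c) (w : n → ℂ) :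
    (c : ℂ) • vecMulVec (((√c : ℝ) : ℂ)⁻¹ • w) (star (((√c : ℝ) : ℂ)⁻¹ • w)) =
      vecMulVec w (star w) := by
  rw [star_smul, smul_vecMulVec, vecMulVec_smul, smul_smul, smul_smul]
  convert one_smul ℂ (vecMulVec w (star w)) using 2
  have hsq : √c ^ 2 = c := Real.sq_sqrt hc.le
  have hsqrt : √c ≠ 0 := by positivity
  simp only [star_inv₀, Complex.star_def, Complex.conj_ofReal]
  field_simp
  exact_mod_cast hsq.symm

end Matrix

def uUnnorm (α : ℝ) : Fin 3 × Fin 3 → ℂ := Pi.single (1, 0) (Real.sin α : ℂ) + Pi.single (2, 1) 1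

def vUnnorm (α : ℝ) : Fin 3 × Fin 3 → ℂ := Pi.single (1, 2) (Real.cos α : ℂ) + Pi.single (0, 1) 1

theorem u_eq_inv_sqrt_smul (α : ℝ) :
    u α = ((√(1 + Real.sin α ^ 2) : ℝ) : ℂ)⁻¹ • uUnnorm α := by
  funext p
  simp only [u, uUnnorm, Pi.smul_apply, Pi.add_apply, Pi.single_apply, smul_eq_mul]
  split_ifs <;> push_cast <;> ring

theorem v_eq_inv_sqrt_smul (α : ℝ) :
    v α = ((√(1 + Real.cos α ^ 2) : ℝ) : ℂ)⁻¹ • vUnnorm α := by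
  funext p
  simp only [v, vUnnorm, Pi.smul_apply, Pi.add_apply, Pi.single_apply, smul_eq_mul]
  split_ifs <;> push_cast <;> ring

theorem Jmat_eq (α : ℝ) :
    Jmat α = vecMulVec (uUnnorm α) (star (uUnnorm α)) +
      vecMulVec (vUnnorm α) (star (vUnnorm α)) := by
  rw [Jmat, u_eq_inv_sqrt_smul, v_eq_inv_sqrt_smul,
    ofReal_smul_vecMulVec_inv_sqrt_smul (by positivity),
    ofReal_smul_vecMulVec_inv_sqrt_smul (by positivity)]

def TBDiag (α : ℝ) : Fin 3 → ℂ := ![2 * (Real.sin α : ℂ) ^ 2, 2, 2 * (Real.cos α : ℂ) ^ 2]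

theorem TB_eq_diagonal (α : ℝ) : TB α = diagonal (TBDiag α) := by
  ext i j
  fin_cases i <;> fin_cases j <;> simp [TB, TBDiag, ket, -Complex.ofReal_sin, -Complex.ofReal_cos]

def slack (α : ℝ) : Fin 3 × Fin 3 → ℂ :=
  (fun p => TBDiag α p.2) -
    (2 : ℂ) • (Pi.single (1, 0) ((Real.sin α : ℂ) ^ 2) + Pi.single (2, 1) 1) -
    (2 : ℂ) • (Pi.single (1, 2) ((Real.cos α : ℂ) ^ 2) + Pi.single (0, 1) 1)

theorem slack_nonneg (α : ℝ) : 0 ≤ slack α := by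
  intro p
  fin_cases p <;> simp [slack, TBDiag, -Complex.ofReal_sin, -Complex.ofReal_cos] <;> norm_cast <;>
    positivity

theorem one_kronecker_TB_sub_Jmat (α : ℝ) :
    (1 : M3) ⊗ₖ TB α - Jmat α =
      vecMulVec (Pi.single (1, 0) (Real.sin α : ℂ) - Pi.single (2, 1) 1)
          (star (Pi.single (1, 0) (Real.sin α : ℂ) - Pi.single (2, 1) 1)) +
        vecMulVec (Pi.single (1, 2) (Real.cos α : ℂ) - Pi.single (0, 1) 1)
          (star (Pi.single (1, 2) (Real.cos α : ℂ) - Pi.single (0, 1) 1)) +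
        diagonal (slack α) := by
  rw [Jmat_eq, uUnnorm, vUnnorm, vecMulVec_add_star_add, vecMulVec_add_star_add,
    vecMulVec_single_star_single, vecMulVec_single_star_single, vecMulVec_single_star_single,
    vecMulVec_single_star_single, TB_eq_diagonal, one_kronecker_diagonal, slack]
  simp only [Pi.sub_def, Pi.add_def, ← diagonal_sub, diagonal_smul, ← diagonal_add,
    Complex.star_def, Complex.conj_ofReal, map_one, ← sq, one_pow]
  abel

theorem simulation_feasible_general (α : ℝ) :
    ((1 : M3) ⊗ₖ TB α - Jmat α).PosSemidef ∧ (TB α).trace = 4 := by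
  refine ⟨?_, ?_⟩
  · rw [one_kronecker_TB_sub_Jmat]
    exact ((posSemidef_vecMulVec_self_star _).add (posSemidef_vecMulVec_self_star _)).add
      (.diagonal (slack_nonneg α))
  · have h : (Real.sin α : ℂ) ^ 2 + (Real.cos α : ℂ) ^ 2 = 1 := by
      exact_mod_cast Real.sin_sq_add_cos_sq α
    rw [TB_eq_diagonal, trace_diagonal, Fin.sum_univ_three]
    simp only [TBDiag, Matrix.cons_val]
    linear_combination 2 * h

theorem simulation_feasible (α : ℝ) (hα : 0 < α) (hα' : α ≤ Real.pi / 4) :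
    ((1 : M3) ⊗ₖ TB α - Jmat α).PosSemidef ∧ (TB α).trace = 4 :=
  simulation_feasible_general α
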